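/- In flow-firing with distinguished face σ starting from K (K σ = k ≥ 0, zero elsewhere), the total sum Σ_{τ ≠ σ} F τ is non-decreasing along the process and bounded above by Σ_{τ ≠ σ} max(0, k − dist(σ,τ) + 1). -/
import Mathlib


def Nb (a b : ℤ × ℤ) : Prop := |a.1 - b.1| + |a.2 - b.2| = 1

def FinSupp (F : ℤ × ℤ → ℤ) : Prop := {τ | F τ ≠ 0}.Finite

/-- A firing step: neighbors `a`, `b` with `F a ≥ F b + 2`; `F a` decreases by 1 and
`F b` increases by 1. -/
def Step (F F' : ℤ × ℤ → ℤ) : Prop :=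
  ∃ a b : ℤ × ℤ, Nb a b ∧ F b + 2 ≤ F a ∧
    F' = Function.update (Function.update F a (F a - 1)) b (F b + 1)

/-- Manhattan distance between faces. -/
def mdist (a b : ℤ × ℤ) : ℤ := |a.1 - b.1| + |a.2 - b.2|

/-- Firing step for the process with distinguished face `σ`. -/
def StepD (σ : ℤ × ℤ) (F F' : ℤ × ℤ → ℤ) : Prop :=
  (∃ a b : ℤ × ℤ, a ≠ σ ∧ b ≠ σ ∧ Nb a b ∧ F b + 2 ≤ F a ∧
      F' = Function.update (Function.update F a (F a - 1)) b (F b + 1)) ∨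
  (∃ a : ℤ × ℤ, Nb a σ ∧ F a < F σ ∧ F' = Function.update F a (F a + 1)) ∨
  (∃ a : ℤ × ℤ, Nb a σ ∧ F σ < F a ∧ F' = Function.update F a (F a - 1))

/-- Initial configuration: `k` at `σ`, zero elsewhere. -/
def Kinit (σ : ℤ × ℤ) (k : ℤ) : ℤ × ℤ → ℤ := fun τ => if τ = σ then k else 0

lemma Nb.ne' {a b : ℤ × ℤ} (h : Nb a b) : a ≠ b := by
  rintro rfl; simp [Nb] at h

lemma mdist_comm (a b : ℤ × ℤ) : mdist a b = mdist b a := by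
  simp [mdist, abs_sub_comm]

lemma mdist_nb {σ a b : ℤ × ℤ} (h : Nb a b) : mdist σ b ≤ mdist σ a + 1 := by
  have h1 := abs_sub_le (σ.1) (a.1) (b.1)
  have h2 := abs_sub_le (σ.2) (a.2) (b.2)
  simp only [mdist]
  have : |a.1 - b.1| + |a.2 - b.2| = 1 := h
  linarith

/-- Invariant along the process. -/
lemma invar (σ : ℤ × ℤ) (k : ℤ) (hk : 0 ≤ k) {F : ℤ × ℤ → ℤ}
    (h : Relation.ReflTransGen (StepD σ) (Kinit σ k) F) :
    FinSupp F ∧ F σ = k ∧ ∀ τ, F τ ≤ max 0 (k - mdist σ τ + 1) := by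
  induction h with
  | refl =>
    refine ⟨(Set.finite_singleton σ).subset ?_, by simp [Kinit], ?_⟩
    · intro τ hτ
      by_cases hne : τ = σ
      · simp [hne]
      · simp [Kinit, hne] at hτ
    · intro τ
      by_cases hτ : τ = σ
      · rw [hτ]
        have hd : mdist σ σ = 0 := by simp [mdist]
        simp only [Kinit, if_pos rfl, hd]
        omega
      · have : Kinit σ k τ = 0 := by simp [Kinit, hτ]
        rw [this]
        simp
  | @tail G F hG step ih =>
    obtain ⟨hfin, hσ, hbnd⟩ := ih
    rcases step with ⟨a, b, ha, hb, hnb, hle, rfl⟩ | ⟨a, hnb, hlt, rfl⟩ | ⟨a, hnb, hlt, rfl⟩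
    · -- internal firing
      have hab : a ≠ b := hnb.ne'
      refine ⟨?_, ?_, ?_⟩
      · refine Set.Finite.subset (hfin.union ((Set.finite_singleton b).insert a)) ?_
        intro τ hτ
        by_cases h1 : τ = b
        · right; simp [h1]
        by_cases h2 : τ = a
        · right; simp [h2]
        left
        simpa [Function.update_apply, h1, h2] using hτ
      · rw [Function.update_of_ne (Ne.symm hb), Function.update_of_ne (Ne.symm ha)]
        exact hσ
      · intro τ
        by_cases h1 : τ = b
        · subst h1
          rw [Function.update_self]
          have hGa := hbnd a
          have hd : mdist σ τ ≤ mdist σ a + 1 := mdist_nb hnb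
          omega
        by_cases h2 : τ = a
        · subst h2
          rw [Function.update_of_ne h1, Function.update_self]
          have := hbnd τ; omega
        · rw [Function.update_of_ne h1, Function.update_of_ne h2]
          exact hbnd τ
    · -- source step
      have ha : a ≠ σ := by intro h; rw [h] at hlt; omega
      refine ⟨?_, ?_, ?_⟩
      · refine Set.Finite.subset (hfin.union (Set.finite_singleton a)) ?_
        intro τ hτ
        by_cases h1 : τ = a
        · right; simp [h1]
        · left; simpa [Function.update_apply, h1] using hτ
      · rw [Function.update_of_ne (Ne.symm ha)]; exact hσ
      · intro τ
        by_cases h1 : τ = a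
        · subst h1
          rw [Function.update_self]
          have hd : mdist σ τ = 1 := by rw [mdist_comm]; exact hnb
          rw [hd]; omega
        · rw [Function.update_of_ne h1]; exact hbnd τ
    · -- sink step: impossible
      exfalso
      have hd : mdist σ a = 1 := by rw [mdist_comm]; exact hnb
      have := hbnd a
      rw [hd] at this
      omega

lemma finsum_ne_eq (σ : ℤ × ℤ) (F : ℤ × ℤ → ℤ) (t : Finset (ℤ × ℤ)) (hσ : σ ∉ t)
    (h : ∀ x, x ≠ σ → F x ≠ 0 → x ∈ t) :
    ∑ᶠ τ ∈ {τ : ℤ × ℤ | τ ≠ σ}, F τ = ∑ x ∈ t, F x := by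
  apply finsum_mem_eq_sum_of_inter_support_eq
  ext x
  simp only [Set.mem_inter_iff, Set.mem_setOf_eq, Function.mem_support, Finset.coe_sort_coe,
    Finset.mem_coe]
  constructor
  · rintro ⟨hx, hFx⟩; exact ⟨h x hx hFx, hFx⟩
  · rintro ⟨hx, hFx⟩; exact ⟨fun he => hσ (he ▸ hx), hFx⟩

/-- The total number of circulation chips off `σ` is non-decreasing and bounded. -/
theorem stmt11 (σ : ℤ × ℤ) (k : ℤ) (hk : 0 ≤ k) :
    (∀ F F' : ℤ × ℤ → ℤ, Relation.ReflTransGen (StepD σ) (Kinit σ k) F →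
      StepD σ F F' →
      (∑ᶠ τ ∈ {τ : ℤ × ℤ | τ ≠ σ}, F τ) ≤ ∑ᶠ τ ∈ {τ : ℤ × ℤ | τ ≠ σ}, F' τ) ∧
    (∀ F : ℤ × ℤ → ℤ, Relation.ReflTransGen (StepD σ) (Kinit σ k) F →
      (∑ᶠ τ ∈ {τ : ℤ × ℤ | τ ≠ σ}, F τ) ≤
      ∑ᶠ τ ∈ {τ : ℤ × ℤ | τ ≠ σ}, max 0 (k - mdist σ τ + 1)) := by
  constructor
  · intro F F' hreach step
    obtain ⟨hfin, hσ, hbnd⟩ := invar σ k hk hreach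
    rcases step with ⟨a, b, ha, hb, hnb, hle, rfl⟩ | ⟨a, hnb, hlt, rfl⟩ | ⟨a, hnb, hlt, rfl⟩
    · -- internal firing: sum preserved
      classical
      have hab : a ≠ b := hnb.ne'
      set t : Finset (ℤ × ℤ) := (hfin.toFinset ∪ {a, b}).erase σ with ht
      have hσt : σ ∉ t := Finset.notMem_erase σ _
      have hat : a ∈ t := by
        simp [ht, Finset.mem_erase, ha]
      have hbt : b ∈ t := by
        simp [ht, Finset.mem_erase, hb]
      have hmemF : ∀ x, x ≠ σ → F x ≠ 0 → x ∈ t := by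
        intro x hx hFx
        simp [ht, Finset.mem_erase, hx, hfin.mem_toFinset]
        tauto
      have hmemF' : ∀ x, x ≠ σ →
          Function.update (Function.update F a (F a - 1)) b (F b + 1) x ≠ 0 → x ∈ t := by
        intro x hx hFx
        by_cases h1 : x = b
        · subst h1; exact hbt
        by_cases h2 : x = a
        · subst h2; exact hat
        rw [Function.update_of_ne h1, Function.update_of_ne h2] at hFx
        exact hmemF x hx hFx
      rw [finsum_ne_eq σ F t hσt hmemF,
        finsum_ne_eq σ _ t hσt hmemF']
      rw [Finset.sum_update_of_mem hbt]
      rw [Finset.sdiff_singleton_eq_erase]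
      have hat' : a ∈ t.erase b := Finset.mem_erase.2 ⟨hab, hat⟩
      rw [Finset.sum_update_of_mem hat', Finset.sdiff_singleton_eq_erase]
      have e1 := Finset.add_sum_erase t F hbt
      have e2 := Finset.add_sum_erase (t.erase b) F hat'
      omega
    · -- source step: sum increases by 1
      classical
      have ha : a ≠ σ := by intro h; rw [h] at hlt; omega
      set t : Finset (ℤ × ℤ) := (hfin.toFinset ∪ {a}).erase σ with ht
      have hσt : σ ∉ t := Finset.notMem_erase σ _
      have hat : a ∈ t := by simp [ht, Finset.mem_erase, ha]
      have hmemF : ∀ x, x ≠ σ → F x ≠ 0 → x ∈ t := by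
        intro x hx hFx
        simp [ht, Finset.mem_erase, hx, hfin.mem_toFinset]
        tauto
      have hmemF' : ∀ x, x ≠ σ → Function.update F a (F a + 1) x ≠ 0 → x ∈ t := by
        intro x hx hFx
        by_cases h1 : x = a
        · subst h1; exact hat
        rw [Function.update_of_ne h1] at hFx
        exact hmemF x hx hFx
      rw [finsum_ne_eq σ F t hσt hmemF, finsum_ne_eq σ _ t hσt hmemF']
      rw [Finset.sum_update_of_mem hat, Finset.sdiff_singleton_eq_erase]
      have e1 := Finset.add_sum_erase t F hat
      omega
    · -- sink step: impossible
      exfalso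
      have hd : mdist σ a = 1 := by rw [mdist_comm]; exact hnb
      have := hbnd a
      rw [hd] at this
      omega
  · intro F hreach
    classical
    obtain ⟨hfin, hσ, hbnd⟩ := invar σ k hk hreach
    set B : Finset (ℤ × ℤ) :=
      Finset.Icc (σ.1 - (k + 1)) (σ.1 + (k + 1)) ×ˢ
        Finset.Icc (σ.2 - (k + 1)) (σ.2 + (k + 1)) with hB
    have hGmem : ∀ x : ℤ × ℤ, max 0 (k - mdist σ x + 1) ≠ 0 → x ∈ B := by
      intro x hx
      have hd : mdist σ x ≤ k := by omega
      have h1 : |σ.1 - x.1| ≤ k := by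
        have h2 : (0:ℤ) ≤ |σ.2 - x.2| := abs_nonneg _
        simp only [mdist] at hd; linarith
      have h2 : |σ.2 - x.2| ≤ k := by
        have h3 : (0:ℤ) ≤ |σ.1 - x.1| := abs_nonneg _
        simp only [mdist] at hd; linarith
      rw [abs_le] at h1 h2
      simp [hB, Finset.mem_Icc]
      omega
    set t : Finset (ℤ × ℤ) := (hfin.toFinset ∪ B).erase σ with ht
    have hσt : σ ∉ t := Finset.notMem_erase σ _
    have hmemF : ∀ x, x ≠ σ → F x ≠ 0 → x ∈ t := by
      intro x hx hFx
      simp [ht, Finset.mem_erase, hx, hfin.mem_toFinset]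
      tauto
    have hmemG : ∀ x, x ≠ σ → max 0 (k - mdist σ x + 1) ≠ 0 → x ∈ t := by
      intro x hx hGx
      simp [ht, Finset.mem_erase, hx]
      right
      exact hGmem x hGx
    rw [finsum_ne_eq σ F t hσt hmemF, finsum_ne_eq σ _ t hσt hmemG]
    exact Finset.sum_le_sum fun x _ => hbnd x
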